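/- arXiv:2512.13538 — 2 statements merged into one kernel-verified Lean document; each statement's English description precedes it below -/
import Mathlib

section
/- Let Q be a distributed place of a safe marked net N with Q ∩ M_init = ∅, ins_Q ≠ ∅, and rem_Q ≠ ∅. Then for every firing sequence σ of N, the projection of σ onto the transitions adjacent to Q (•Q ∪ Q•) is a prefix of a sequence in (cinseq_Q ∘ coutseq_Q)^+, i.e., an alternation of complete in-sequences and complete out-sequences of Q starting with an in-sequence. -/
open Set

structure Net (P T : Type) where
  pre : T → Set P
  post : T → Set P
  minit : Set P

variable {P T : Type}

def fireable (N : Net P T) (t : T) (M : Set P) : Prop := N.pre t ⊆ M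

def fire (N : Net P T) (t : T) (M : Set P) : Set P := (M \ N.pre t) ∪ N.post t

def valid (N : Net P T) : Set P → List T → Prop
  | _, [] => True
  | M, t :: σ => fireable N t M ∧ valid N (fire N t M) σ

def runFrom (N : Net P T) (M : Set P) (σ : List T) : Set P :=
  σ.foldl (fun M t => fire N t M) M

def isFiringSeq (N : Net P T) (σ : List T) : Prop := valid N N.minit σ

def reachable (N : Net P T) (M : Set P) : Prop :=
  ∃ σ, isFiringSeq N σ ∧ runFrom N N.minit σ = M

def safe (N : Net P T) : Prop :=
  ∀ M, reachable N M → ∀ t, fireable N t M → (N.post t \ N.pre t) ∩ M = ∅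

/-- transitions inserting tokens into some place of `Q` (the set `•Q`). -/
def preQ (N : Net P T) (Q : Set P) : Set T := {t | (N.post t ∩ Q).Nonempty}

/-- transitions removing tokens from some place of `Q` (the set `Q•`). -/
def postQ (N : Net P T) (Q : Set P) : Set T := {t | (N.pre t ∩ Q).Nonempty}

def adjQ (N : Net P T) (Q : Set P) : Set T := preQ N Q ∪ postQ N Q

def insQ (N : Net P T) (Q : Set P) : Set T := preQ N Q \ postQ N Q

def remQ (N : Net P T) (Q : Set P) : Set T := postQ N Q \ preQ N Q

def readQ (N : Net P T) (Q : Set P) : Set T :=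
  {t ∈ adjQ N Q | N.pre t ∩ Q = N.post t ∩ Q}

def enablesQ (N : Net P T) (Q : Set P) : Set (T × T) :=
  {tu | (Q ∩ (N.post tu.1 \ N.pre tu.1) ∩ N.pre tu.2).Nonempty}

def disablesQ (N : Net P T) (Q : Set P) : Set (T × T) :=
  {tu | (Q ∩ (N.pre tu.1 \ N.post tu.1) ∩ N.pre tu.2).Nonempty}

def postList (N : Net P T) (l : List T) : Set P := ⋃ t ∈ l, N.post t

def epreList (N : Net P T) (l : List T) : Set P := ⋃ t ∈ l, (N.pre t \ N.post t)

def isInSeq (N : Net P T) (Q : Set P) (σ : List T) : Prop :=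
  σ ≠ [] ∧ (∀ t ∈ σ, t ∈ insQ N Q ∪ readQ N Q) ∧
  (∀ t ∈ σ.head?, t ∈ insQ N Q) ∧
  ∀ i (h : i < σ.length), 0 < i →
    Q ∩ N.pre (σ.get ⟨i, h⟩) ⊆ postList N (σ.take i) ∧
    Q ∩ (N.post (σ.get ⟨i, h⟩) \ N.pre (σ.get ⟨i, h⟩)) ∩ postList N (σ.take i) = ∅

def isCInSeq (N : Net P T) (Q : Set P) (σ : List T) : Prop :=
  isInSeq N Q σ ∧ Q ⊆ postList N σ

def isOutSeq (N : Net P T) (Q : Set P) (σ : List T) : Prop :=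
  σ ≠ [] ∧ (∀ t ∈ σ, t ∈ remQ N Q ∪ readQ N Q) ∧
  (∀ t ∈ σ.head?, t ∈ remQ N Q) ∧
  ∀ i (h : i < σ.length), 0 < i →
    Q ∩ N.pre (σ.get ⟨i, h⟩) ⊆ Q \ epreList N (σ.take i)

def isCOutSeq (N : Net P T) (Q : Set P) (σ : List T) : Prop :=
  isOutSeq N Q σ ∧ Q ⊆ epreList N σ

def distPlace (N : Net P T) (Q : Set P) : Prop :=
  Q.Nonempty ∧
  adjQ N Q = insQ N Q ∪ remQ N Q ∪ readQ N Q ∧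
  (∀ t ∈ insQ N Q, ∀ u ∈ remQ N Q, (t, u) ∈ enablesQ N Q) ∧
  (∀ σ, isInSeq N Q σ → ∃ τ, σ <+: τ ∧ isCInSeq N Q τ) ∧
  (∀ σ, isOutSeq N Q σ → ∃ τ, σ <+: τ ∧ isCOutSeq N Q τ)

def pureDP (N : Net P T) (Q : Set P) : Prop := postQ N Q ∩ preQ N Q = ∅

def separated (N : Net P T) (Q R : Set P) : Prop := adjQ N Q ∩ adjQ N R = ∅

/-- projection of a sequence onto a set of transitions -/
def proj (V : Set T) [DecidablePred (· ∈ V)] (σ : List T) : List T :=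
  σ.filter (fun t => decide (t ∈ V))

/-- language concatenation -/
def langMul (L L' : Set (List T)) : Set (List T) :=
  {w | ∃ u ∈ L, ∃ v ∈ L', w = u ++ v}

/-- nonempty iteration `L⁺`: nonempty concatenations of words of `L` -/
def langPlus (L : Set (List T)) : Set (List T) :=
  {w | ∃ ls : List (List T), ls ≠ [] ∧ (∀ u ∈ ls, u ∈ L) ∧ w = ls.flatten}

section Aux

variable {N : Net P T} {Q : Set P}

lemma postList_singleton (N : Net P T) (t : T) : postList N [t] = N.post t := by
  simp [postList]

lemma epreList_singleton (N : Net P T) (t : T) : epreList N [t] = N.pre t \ N.post t := by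
  simp [epreList]

lemma postList_nil (N : Net P T) : postList N ([] : List T) = ∅ := by simp [postList]

lemma postList_append (N : Net P T) (a b : List T) :
    postList N (a ++ b) = postList N a ∪ postList N b := by
  ext p
  simp only [postList, Set.mem_iUnion, Set.mem_union, List.mem_append]
  constructor
  · rintro ⟨t, h | h, hp⟩
    · exact Or.inl ⟨t, h, hp⟩
    · exact Or.inr ⟨t, h, hp⟩
  · rintro (⟨t, h, hp⟩ | ⟨t, h, hp⟩)
    · exact ⟨t, Or.inl h, hp⟩
    · exact ⟨t, Or.inr h, hp⟩

lemma epreList_append (N : Net P T) (a b : List T) :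
    epreList N (a ++ b) = epreList N a ∪ epreList N b := by
  ext p
  simp only [epreList, Set.mem_iUnion, Set.mem_union, List.mem_append]
  constructor
  · rintro ⟨t, h | h, hp⟩
    · exact Or.inl ⟨t, h, hp⟩
    · exact Or.inr ⟨t, h, hp⟩
  · rintro (⟨t, h, hp⟩ | ⟨t, h, hp⟩)
    · exact ⟨t, Or.inl h, hp⟩
    · exact ⟨t, Or.inr h, hp⟩

lemma postList_mono (N : Net P T) {a b : List T} (h : a ⊆ b) :
    postList N a ⊆ postList N b := by
  intro p hp; simp only [postList, Set.mem_iUnion] at *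
  obtain ⟨t, ht, hpt⟩ := hp; exact ⟨t, h ht, hpt⟩

lemma epreList_mono (N : Net P T) {a b : List T} (h : a ⊆ b) :
    epreList N a ⊆ epreList N b := by
  intro p hp; simp only [epreList, Set.mem_iUnion] at *
  obtain ⟨t, ht, hpt⟩ := hp; exact ⟨t, h ht, hpt⟩

lemma runFrom_append (N : Net P T) (M : Set P) (a b : List T) :
    runFrom N M (a ++ b) = runFrom N (runFrom N M a) b := by
  simp [runFrom]

lemma valid_append (N : Net P T) (M : Set P) (a b : List T) :
    valid N M (a ++ b) ↔ valid N M a ∧ valid N (runFrom N M a) b := by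
  induction a generalizing M with
  | nil => simp [valid, runFrom]
  | cons t a ih =>
    simp only [List.cons_append, valid, ih, runFrom, List.foldl_cons, and_assoc,
      List.append_eq]

lemma fire_inter (N : Net P T) (Q : Set P) (t : T) (M : Set P) :
    fire N t M ∩ Q = ((M ∩ Q) \ N.pre t) ∪ (N.post t ∩ Q) := by
  ext p; simp [fire]; tauto

lemma read_pre_inter {t : T} (ht : t ∈ readQ N Q) : N.pre t ∩ Q = N.post t ∩ Q := ht.2

lemma read_diff_post {t : T} (ht : t ∈ readQ N Q) : (N.post t \ N.pre t) ∩ Q = ∅ := by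
  ext p; simp only [Set.mem_inter_iff, Set.mem_diff, Set.mem_empty_iff_false, iff_false]
  rintro ⟨⟨hpo, hpr⟩, hq⟩
  exact hpr (((read_pre_inter ht).symm ▸ (Set.mem_inter hpo hq : p ∈ N.post t ∩ Q)) :
    p ∈ N.pre t ∩ Q).1

lemma read_diff_pre {t : T} (ht : t ∈ readQ N Q) : (N.pre t \ N.post t) ∩ Q = ∅ := by
  ext p; simp only [Set.mem_inter_iff, Set.mem_diff, Set.mem_empty_iff_false, iff_false]
  rintro ⟨⟨hpr, hpo⟩, hq⟩
  exact hpo (((read_pre_inter ht) ▸ (Set.mem_inter hpr hq : p ∈ N.pre t ∩ Q)) :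
    p ∈ N.post t ∩ Q).1

lemma read_pre_nonempty {t : T} (ht : t ∈ readQ N Q) : (N.pre t ∩ Q).Nonempty := by
  rcases ht.1 with h | h
  · rw [read_pre_inter ht]; exact h
  · exact h

lemma ins_pre {t : T} (ht : t ∈ insQ N Q) : N.pre t ∩ Q = ∅ := by
  have h2 := ht.2
  simp only [postQ, Set.mem_setOf_eq, Set.not_nonempty_iff_eq_empty] at h2
  exact h2

lemma rem_post {t : T} (ht : t ∈ remQ N Q) : N.post t ∩ Q = ∅ := by
  have h2 := ht.2
  simp only [preQ, Set.mem_setOf_eq, Set.not_nonempty_iff_eq_empty] at h2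
  exact h2

lemma rem_pre_nonempty {t : T} (ht : t ∈ remQ N Q) : (N.pre t ∩ Q).Nonempty := ht.1

lemma notadj_pre {t : T} (ht : t ∉ adjQ N Q) : N.pre t ∩ Q = ∅ := by
  have h : t ∉ postQ N Q := fun h => ht (Or.inr h)
  simpa [postQ, Set.not_nonempty_iff_eq_empty] using h

lemma notadj_post {t : T} (ht : t ∉ adjQ N Q) : N.post t ∩ Q = ∅ := by
  have h : t ∉ preQ N Q := fun h => ht (Or.inl h)
  simpa [preQ, Set.not_nonempty_iff_eq_empty] using h

lemma adj_cases (hdp : distPlace N Q) {t : T} (ht : t ∈ adjQ N Q) :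
    t ∈ insQ N Q ∨ t ∈ remQ N Q ∨ t ∈ readQ N Q := by
  have h := hdp.2.1 ▸ ht
  rcases h with (h | h) | h
  · exact Or.inl h
  · exact Or.inr (Or.inl h)
  · exact Or.inr (Or.inr h)

lemma isInSeq_singleton {t : T} (ht : t ∈ insQ N Q) : isInSeq N Q [t] := by
  refine ⟨by simp, ?_, ?_, ?_⟩
  · intro u hu; simp at hu; subst hu; exact Or.inl ht
  · intro u hu; simp at hu; subst hu; exact ht
  · intro i h hi; simp at h; omega

lemma isOutSeq_singleton {t : T} (ht : t ∈ remQ N Q) : isOutSeq N Q [t] := by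
  refine ⟨by simp, ?_, ?_, ?_⟩
  · intro u hu; simp at hu; subst hu; exact Or.inl ht
  · intro u hu; simp at hu; subst hu; exact ht
  · intro i h hi; simp at h; omega

lemma isInSeq_snoc {ρ : List T} {t : T} (hρ : isInSeq N Q ρ)
    (ht : t ∈ insQ N Q ∪ readQ N Q)
    (h1 : Q ∩ N.pre t ⊆ postList N ρ)
    (h2 : Q ∩ (N.post t \ N.pre t) ∩ postList N ρ = ∅) :
    isInSeq N Q (ρ ++ [t]) := by
  obtain ⟨hne, hall, hhead, hidx⟩ := hρ
  refine ⟨by simp, ?_, ?_, ?_⟩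
  · intro u hu; rcases List.mem_append.1 hu with h | h
    · exact hall u h
    · simp at h; subst h; exact ht
  · intro u hu
    rw [List.head?_append_of_ne_nil _ hne] at hu
    exact hhead u hu
  · intro i h hi
    have hlen : i < ρ.length + 1 := by simpa using h
    rcases lt_or_eq_of_le (Nat.lt_succ_iff.mp hlen) with hlt | heq
    · have hget : (ρ ++ [t]).get ⟨i, h⟩ = ρ.get ⟨i, hlt⟩ := by
        simp [List.get_eq_getElem, List.getElem_append_left hlt]
      have htake : (ρ ++ [t]).take i = ρ.take i :=
        List.take_append_of_le_length (le_of_lt hlt)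
      rw [hget, htake]; exact hidx i hlt hi
    · subst heq
      have hget : (ρ ++ [t]).get ⟨ρ.length, h⟩ = t := by
        simp [List.get_eq_getElem]
      have htake : (ρ ++ [t]).take ρ.length = ρ := List.take_left
      rw [hget, htake]
      exact ⟨h1, h2⟩

lemma isOutSeq_snoc {ρ : List T} {t : T} (hρ : isOutSeq N Q ρ)
    (ht : t ∈ remQ N Q ∪ readQ N Q)
    (h1 : Q ∩ N.pre t ⊆ Q \ epreList N ρ) :
    isOutSeq N Q (ρ ++ [t]) := by
  obtain ⟨hne, hall, hhead, hidx⟩ := hρ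
  refine ⟨by simp, ?_, ?_, ?_⟩
  · intro u hu; rcases List.mem_append.1 hu with h | h
    · exact hall u h
    · simp at h; subst h; exact ht
  · intro u hu
    rw [List.head?_append_of_ne_nil _ hne] at hu
    exact hhead u hu
  · intro i h hi
    have hlen : i < ρ.length + 1 := by simpa using h
    rcases lt_or_eq_of_le (Nat.lt_succ_iff.mp hlen) with hlt | heq
    · have hget : (ρ ++ [t]).get ⟨i, h⟩ = ρ.get ⟨i, hlt⟩ := by
        simp [List.get_eq_getElem, List.getElem_append_left hlt]
      have htake : (ρ ++ [t]).take i = ρ.take i :=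
        List.take_append_of_le_length (le_of_lt hlt)
      rw [hget, htake]; exact hidx i hlt hi
    · subst heq
      have hget : (ρ ++ [t]).get ⟨ρ.length, h⟩ = t := by
        simp [List.get_eq_getElem]
      have htake : (ρ ++ [t]).take ρ.length = ρ := List.take_left
      rw [hget, htake]
      exact h1

lemma postList_take_subset (N : Net P T) (τ : List T) {m i : ℕ} (h : m ≤ i) :
    postList N (τ.take m) ⊆ postList N (τ.take i) :=
  postList_mono N (List.IsPrefix.subset (List.take_prefix_take_left h))

lemma epreList_take_subset (N : Net P T) (τ : List T) {m i : ℕ} (h : m ≤ i) :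
    epreList N (τ.take m) ⊆ epreList N (τ.take i) :=
  epreList_mono N (List.IsPrefix.subset (List.take_prefix_take_left h))

lemma crux_in (hdp : distPlace N Q) {ρ : List T} (hρ : isInSeq N Q ρ) {u : T}
    (hu : u ∈ remQ N Q) (hsub : Q ∩ N.pre u ⊆ postList N ρ) :
    Q ⊆ postList N ρ := by
  classical
  obtain ⟨τ, hpre, hcin⟩ := hdp.2.2.2.1 ρ hρ
  have hρτ : τ.take ρ.length = ρ := (List.prefix_iff_eq_take.1 hpre).symm
  intro q hq
  by_contra hq'
  have hqτ : q ∈ postList N τ := hcin.2 hq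
  have hex : ∃ i, ∃ h : i < τ.length, q ∈ N.post (τ.get ⟨i, h⟩) := by
    simp only [postList, Set.mem_iUnion] at hqτ
    obtain ⟨t, htm, hqt⟩ := hqτ
    obtain ⟨⟨i, hi⟩, rfl⟩ := List.mem_iff_get.1 htm
    exact ⟨i, hi, hqt⟩
  set i := Nat.find hex with hidef
  obtain ⟨h, hqi⟩ : ∃ h : i < τ.length, q ∈ N.post (τ.get ⟨i, h⟩) := Nat.find_spec hex
  have hmin : ∀ j, j < i → ¬ ∃ h : j < τ.length, q ∈ N.post (τ.get ⟨j, h⟩) :=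
    fun j hj => Nat.find_min hex hj
  have hnot : q ∉ postList N (τ.take i) := by
    intro hmem
    simp only [postList, Set.mem_iUnion] at hmem
    obtain ⟨t, htm, hqt⟩ := hmem
    obtain ⟨⟨j, hj⟩, rfl⟩ := List.mem_iff_get.1 htm
    have hj1 : j < i := by simp [List.length_take] at hj; omega
    have hj2 : j < τ.length := by simp [List.length_take] at hj; omega
    refine hmin j hj1 ⟨hj2, ?_⟩
    have hgt : (τ.take i).get ⟨j, hj⟩ = τ.get ⟨j, hj2⟩ := by
      simp [List.get_eq_getElem]
    rwa [hgt] at hqt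
  have hge : ρ.length ≤ i := by
    by_contra hlt
    push_neg at hlt
    apply hq'
    rw [← hρτ]
    simp only [postList, Set.mem_iUnion]
    refine ⟨τ.get ⟨i, h⟩, ?_, hqi⟩
    have hi' : i < (τ.take ρ.length).length := by simp [List.length_take]; omega
    have heq : (τ.take ρ.length).get ⟨i, hi'⟩ = τ.get ⟨i, h⟩ := by
      simp [List.get_eq_getElem]
    exact heq ▸ List.get_mem _ _
  have hpos : 0 < i := lt_of_lt_of_le (List.length_pos_iff.2 hρ.1) hge
  have hcond := hcin.1.2.2.2 i h hpos
  rcases hcin.1.2.1 _ (List.get_mem τ ⟨i, h⟩) with hins' | hread'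
  · obtain ⟨p, hp⟩ := hdp.2.2.1 _ hins' u hu
    have hp1 : p ∈ postList N ρ := hsub ⟨hp.1.1, hp.2⟩
    have hp2 : p ∈ postList N (τ.take i) := by
      rw [← hρτ] at hp1; exact postList_take_subset N τ hge hp1
    have : p ∈ (∅ : Set P) := hcond.2 ▸ (Set.mem_inter hp.1 hp2)
    exact this
  · have hqpre : q ∈ N.pre (τ.get ⟨i, h⟩) :=
      ((read_pre_inter hread') ▸ (Set.mem_inter hqi hq :
        q ∈ N.post (τ.get ⟨i, h⟩) ∩ Q) : q ∈ N.pre (τ.get ⟨i, h⟩) ∩ Q).1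
    exact hnot (hcond.1 ⟨hq, hqpre⟩)

lemma crux_out (hdp : distPlace N Q) {ρ : List T} (hρ : isOutSeq N Q ρ) {t : T}
    (ht : t ∈ insQ N Q)
    (hdisj : Q ∩ (N.post t \ N.pre t) ∩ (Q \ epreList N ρ) = ∅) :
    Q ⊆ epreList N ρ := by
  obtain ⟨τ, hpre, hcout⟩ := hdp.2.2.2.2 ρ hρ
  have hρτ : τ.take ρ.length = ρ := (List.prefix_iff_eq_take.1 hpre).symm
  intro q hq
  by_contra hq'
  have hqτ : q ∈ epreList N τ := hcout.2 hq
  simp only [epreList, Set.mem_iUnion] at hqτ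
  obtain ⟨u, hum, hqu⟩ := hqτ
  obtain ⟨⟨i, h⟩, rfl⟩ := List.mem_iff_get.1 hum
  have hge : ρ.length ≤ i := by
    by_contra hlt
    push_neg at hlt
    apply hq'
    rw [← hρτ]
    simp only [epreList, Set.mem_iUnion]
    refine ⟨τ.get ⟨i, h⟩, ?_, hqu⟩
    have hi' : i < (τ.take ρ.length).length := by simp [List.length_take]; omega
    have heq : (τ.take ρ.length).get ⟨i, hi'⟩ = τ.get ⟨i, h⟩ := by
      simp [List.get_eq_getElem]
    exact heq ▸ List.get_mem _ _
  have hpos : 0 < i := lt_of_lt_of_le (List.length_pos_iff.2 hρ.1) hge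
  have hcond := hcout.1.2.2.2 i h hpos
  rcases hcout.1.2.1 _ (List.get_mem τ ⟨i, h⟩) with hrem' | hread'
  · obtain ⟨p, hp⟩ := hdp.2.2.1 t ht _ hrem'
    have hp2 : p ∈ Q \ epreList N (τ.take i) := hcond ⟨hp.1.1, hp.2⟩
    have hp3 : p ∈ Q \ epreList N ρ :=
      ⟨hp2.1, fun hc => hp2.2 (epreList_take_subset N τ hge (by rw [hρτ]; exact hc))⟩
    have : p ∈ (∅ : Set P) := hdisj ▸ (Set.mem_inter hp.1 hp3)
    exact this
  · have : q ∈ (∅ : Set P) := (read_diff_pre hread') ▸ (Set.mem_inter hqu hq)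
    exact this

lemma proj_snoc (V : Set T) [DecidablePred (· ∈ V)] (σ : List T) (t : T) :
    proj V (σ ++ [t]) = proj V σ ++ if t ∈ V then [t] else [] := by
  by_cases h : t ∈ V <;> simp [proj, List.filter_append, h]

def InvQ (N : Net P T) (Q : Set P) [DecidablePred (· ∈ adjQ N Q)] (σ : List T) : Prop :=
  (∃ (J : List (List T)) (ρ : List T), (∀ b ∈ J, b ∈ langMul {ω | isCInSeq N Q ω} {ω | isCOutSeq N Q ω}) ∧
      proj (adjQ N Q) σ = J.flatten ++ ρ ∧ (ρ = [] ∨ isInSeq N Q ρ) ∧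
      runFrom N N.minit σ ∩ Q = Q ∩ postList N ρ) ∨
  (∃ (J : List (List T)) (τ ρ : List T), (∀ b ∈ J, b ∈ langMul {ω | isCInSeq N Q ω} {ω | isCOutSeq N Q ω}) ∧
      proj (adjQ N Q) σ = J.flatten ++ (τ ++ ρ) ∧ isCInSeq N Q τ ∧ isOutSeq N Q ρ ∧
      runFrom N N.minit σ ∩ Q = Q \ epreList N ρ)

lemma inv_all (N : Net P T) (Q : Set P) [DecidablePred (· ∈ adjQ N Q)]
    (hsafe : safe N) (hdp : distPlace N Q) (hinit : Q ∩ N.minit = ∅) :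
    ∀ σ, isFiringSeq N σ → InvQ N Q σ := by
  intro σ
  induction σ using List.reverseRecOn with
  | nil =>
    intro _
    unfold InvQ
    left
    refine ⟨[], [], by simp, by simp [proj], Or.inl rfl, ?_⟩
    rw [postList_nil]
    simp only [runFrom, List.foldl_nil, Set.inter_empty]
    rw [Set.inter_comm]; exact hinit
  | append_singleton σ t ih =>
    intro hv
    rw [isFiringSeq, valid_append] at hv
    obtain ⟨hvσ, hvt⟩ := hv
    have hfire : fireable N t (runFrom N N.minit σ) := hvt.1
    set M := runFrom N N.minit σ with hM
    have hreach : reachable N M := ⟨σ, hvσ, rfl⟩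
    have hsafet := hsafe M hreach t hfire
    have hsafeP : ∀ p, p ∈ N.post t → p ∉ N.pre t → p ∈ M → False := fun p h1 h2 h3 =>
      Set.eq_empty_iff_forall_notMem.1 hsafet p ⟨⟨h1, h2⟩, h3⟩
    have hfireP : ∀ p, p ∈ N.pre t → p ∈ M := fun p hp => hfire hp
    have hMQ' : runFrom N N.minit (σ ++ [t]) ∩ Q =
        ((M ∩ Q) \ N.pre t) ∪ (N.post t ∩ Q) := by
      rw [runFrom_append]
      exact fire_inter N Q t M
    have ihv := ih hvσ
    unfold InvQ at ihv ⊢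
    by_cases hadj : t ∈ adjQ N Q
    · have hproj : proj (adjQ N Q) (σ ++ [t]) = proj (adjQ N Q) σ ++ [t] := by
        simp [proj_snoc, hadj]
      rcases adj_cases hdp hadj with hins' | hrem' | hread'
      · -- t inserts tokens
        have hpreP : ∀ p, p ∈ N.pre t → p ∉ Q := fun p h1 h2 =>
          Set.eq_empty_iff_forall_notMem.1 (ins_pre hins') p ⟨h1, h2⟩
        rcases ihv with ⟨J, ρ, hJ, hπ, hρc, hMa⟩ | ⟨J, τ, ρ, hJ, hπ, hτ, hρ, hMb⟩
        · -- state A, stay in A with ρ ++ [t]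
          have hMaP := Set.ext_iff.1 hMa
          left
          refine ⟨J, ρ ++ [t], hJ, by rw [hproj, hπ, List.append_assoc], ?_, ?_⟩
          · right
            rcases hρc with rfl | hρ
            · simpa using isInSeq_singleton hins'
            · refine isInSeq_snoc hρ (Or.inl hins') ?_ ?_
              · intro p hp; exact absurd hp.1 (hpreP p hp.2)
              · apply Set.eq_empty_iff_forall_notMem.2
                rintro p ⟨⟨hq, hpo, hpr⟩, hpl⟩
                exact hsafeP p hpo hpr (((hMaP p).2 ⟨hq, hpl⟩).1)
          · rw [hMQ', hMa, postList_append, postList_singleton]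
            ext p
            simp only [Set.mem_union, Set.mem_diff, Set.mem_inter_iff]
            constructor
            · rintro (⟨⟨hq, hl⟩, -⟩ | ⟨hpo, hq⟩)
              · exact ⟨hq, Or.inl hl⟩
              · exact ⟨hq, Or.inr hpo⟩
            · rintro ⟨hq, hl | hpo⟩
              · exact Or.inl ⟨⟨hq, hl⟩, fun hc => hpreP p hc hq⟩
              · exact Or.inr ⟨hpo, hq⟩
        · -- state B, t ∈ insQ: out-sequence must be complete, start new block
          have hMbP := Set.ext_iff.1 hMb
          have hdisj : Q ∩ (N.post t \ N.pre t) ∩ (Q \ epreList N ρ) = ∅ := by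
            apply Set.eq_empty_iff_forall_notMem.2
            rintro p ⟨⟨hq, hpo, hpr⟩, hqe⟩
            exact hsafeP p hpo hpr ((hMbP p).2 hqe).1
          have hfull : Q ⊆ epreList N ρ := crux_out hdp hρ hins' hdisj
          have hMempty : M ∩ Q = ∅ := by
            rw [hMb]
            apply Set.eq_empty_iff_forall_notMem.2
            rintro p ⟨hq, he⟩
            exact he (hfull hq)
          left
          refine ⟨J ++ [τ ++ ρ], [t], ?_, ?_, Or.inr (isInSeq_singleton hins'), ?_⟩
          · intro b hb
            rcases List.mem_append.1 hb with h | h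
            · exact hJ b h
            · simp at h; subst h
              exact ⟨τ, hτ, ρ, ⟨hρ, hfull⟩, rfl⟩
          · rw [hproj, hπ]
            simp [List.flatten_append, List.append_assoc]
          · rw [hMQ', hMempty, postList_singleton]
            ext p
            simp only [Set.mem_union, Set.mem_diff, Set.mem_inter_iff,
              Set.mem_empty_iff_false, false_and, Set.empty_diff]
            tauto
      · -- t removes tokens
        have hpostP : ∀ p, p ∈ N.post t → p ∉ Q := fun p h1 h2 =>
          Set.eq_empty_iff_forall_notMem.1 (rem_post hrem') p ⟨h1, h2⟩
        rcases ihv with ⟨J, ρ, hJ, hπ, hρc, hMa⟩ | ⟨J, τ, ρ, hJ, hπ, hτ, hρ, hMb⟩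
        · -- state A, t ∈ remQ: the in-sequence must be complete, switch to B
          have hMaP := Set.ext_iff.1 hMa
          have hρ : isInSeq N Q ρ := by
            rcases hρc with rfl | hρ
            · exfalso
              obtain ⟨p, hp1, hp2⟩ := rem_pre_nonempty hrem'
              have : p ∈ Q ∩ postList N [] := (hMaP p).1 ⟨hfireP p hp1, hp2⟩
              rw [postList_nil] at this
              exact this.2
            · exact hρ
          have hsub : Q ∩ N.pre t ⊆ postList N ρ := fun p hp =>
            ((hMaP p).1 ⟨hfireP p hp.2, hp.1⟩).2
          have hfull : Q ⊆ postList N ρ := crux_in hdp hρ hrem' hsub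
          right
          refine ⟨J, ρ, [t], hJ, by rw [hproj, hπ, List.append_assoc], ⟨hρ, hfull⟩,
            isOutSeq_singleton hrem', ?_⟩
          rw [hMQ', hMa, epreList_singleton]
          ext p
          simp only [Set.mem_union, Set.mem_diff, Set.mem_inter_iff]
          constructor
          · rintro (⟨⟨hq, -⟩, hpr⟩ | ⟨hpo, hq⟩)
            · exact ⟨hq, fun hc => hpr hc.1⟩
            · exact absurd hq (hpostP p hpo)
          · rintro ⟨hq, hnpr⟩
            have hppl : p ∈ postList N ρ := hfull hq
            refine Or.inl ⟨⟨hq, hppl⟩, fun hc => ?_⟩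
            exact hnpr ⟨hc, fun hpo => hpostP p hpo hq⟩
        · -- state B, stay in B with ρ ++ [t]
          have hMbP := Set.ext_iff.1 hMb
          have h1 : Q ∩ N.pre t ⊆ Q \ epreList N ρ := fun p hp =>
            (hMbP p).1 ⟨hfireP p hp.2, hp.1⟩
          right
          refine ⟨J, τ, ρ ++ [t], hJ, ?_, hτ,
            isOutSeq_snoc hρ (Or.inl hrem') h1, ?_⟩
          · rw [hproj, hπ]; simp [List.append_assoc]
          · rw [hMQ', hMb, epreList_append, epreList_singleton]
            ext p
            simp only [Set.mem_union, Set.mem_diff, Set.mem_inter_iff, not_or]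
            constructor
            · rintro (⟨⟨hq, he⟩, hpr⟩ | ⟨hpo, hq⟩)
              · exact ⟨hq, he, fun hc => hpr hc.1⟩
              · exact absurd hq (hpostP p hpo)
            · rintro ⟨hq, he, hnpr⟩
              exact Or.inl ⟨⟨hq, he⟩, fun hc => hnpr ⟨hc, fun hpo => hpostP p hpo hq⟩⟩
      · -- t reads tokens
        have hreadP := Set.ext_iff.1 (read_pre_inter hread')
        rcases ihv with ⟨J, ρ, hJ, hπ, hρc, hMa⟩ | ⟨J, τ, ρ, hJ, hπ, hτ, hρ, hMb⟩
        · -- state A, stay in A with ρ ++ [t]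
          have hMaP := Set.ext_iff.1 hMa
          have hρ : isInSeq N Q ρ := by
            rcases hρc with rfl | hρ
            · exfalso
              obtain ⟨p, hp1, hp2⟩ := read_pre_nonempty hread'
              have : p ∈ Q ∩ postList N [] := (hMaP p).1 ⟨hfireP p hp1, hp2⟩
              rw [postList_nil] at this
              exact this.2
            · exact hρ
          have h1 : Q ∩ N.pre t ⊆ postList N ρ := fun p hp =>
            ((hMaP p).1 ⟨hfireP p hp.2, hp.1⟩).2
          left
          refine ⟨J, ρ ++ [t], hJ, by rw [hproj, hπ, List.append_assoc], ?_, ?_⟩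
          · right
            refine isInSeq_snoc hρ (Or.inr hread') h1 ?_
            apply Set.eq_empty_iff_forall_notMem.2
            rintro p ⟨⟨hq, hpo, hpr⟩, -⟩
            exact absurd (((read_diff_post hread') ▸
              (Set.mem_inter (Set.mem_diff_of_mem hpo hpr) hq :
                p ∈ (N.post t \ N.pre t) ∩ Q)) : p ∈ (∅ : Set P)) (Set.notMem_empty p)
          · rw [hMQ', hMa, postList_append, postList_singleton]
            ext p
            simp only [Set.mem_union, Set.mem_diff, Set.mem_inter_iff]
            constructor
            · rintro (⟨⟨hq, hl⟩, -⟩ | ⟨hpo, hq⟩)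
              · exact ⟨hq, Or.inl hl⟩
              · exact ⟨hq, Or.inr hpo⟩
            · rintro ⟨hq, hl | hpo⟩
              · by_cases hc : p ∈ N.pre t
                · have hpo : p ∈ N.post t := ((hreadP p).1 ⟨hc, hq⟩).1
                  exact Or.inr ⟨hpo, hq⟩
                · exact Or.inl ⟨⟨hq, hl⟩, hc⟩
              · exact Or.inr ⟨hpo, hq⟩
        · -- state B, stay in B with ρ ++ [t]
          have hMbP := Set.ext_iff.1 hMb
          have h1 : Q ∩ N.pre t ⊆ Q \ epreList N ρ := fun p hp =>
            (hMbP p).1 ⟨hfireP p hp.2, hp.1⟩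
          right
          refine ⟨J, τ, ρ ++ [t], hJ, ?_, hτ,
            isOutSeq_snoc hρ (Or.inr hread') h1, ?_⟩
          · rw [hproj, hπ]; simp [List.append_assoc]
          · rw [hMQ', hMb, epreList_append, epreList_singleton]
            ext p
            simp only [Set.mem_union, Set.mem_diff, Set.mem_inter_iff, not_or]
            constructor
            · rintro (⟨⟨hq, he⟩, hpr⟩ | ⟨hpo, hq⟩)
              · exact ⟨hq, he, fun hc => hpr hc.1⟩
              · refine ⟨hq, ?_, fun hc => hc.2 hpo⟩
                have hpr : p ∈ N.pre t := ((hreadP p).2 ⟨hpo, hq⟩).1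
                exact ((hMbP p).1 ⟨hfireP p hpr, hq⟩).2
            · rintro ⟨hq, he, hnpr⟩
              by_cases hc : p ∈ N.pre t
              · have hpo : p ∈ N.post t := ((hreadP p).1 ⟨hc, hq⟩).1
                exact Or.inr ⟨hpo, hq⟩
              · exact Or.inl ⟨⟨hq, he⟩, hc⟩
    · -- t not adjacent to Q: nothing changes
      have hproj : proj (adjQ N Q) (σ ++ [t]) = proj (adjQ N Q) σ := by
        simp [proj_snoc, hadj]
      have hpreP : ∀ p, p ∈ N.pre t → p ∉ Q := fun p h1 h2 =>
        Set.eq_empty_iff_forall_notMem.1 (notadj_pre hadj) p ⟨h1, h2⟩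
      have hpostP : ∀ p, p ∈ N.post t → p ∉ Q := fun p h1 h2 =>
        Set.eq_empty_iff_forall_notMem.1 (notadj_post hadj) p ⟨h1, h2⟩
      have hMQ : runFrom N N.minit (σ ++ [t]) ∩ Q = M ∩ Q := by
        rw [hMQ']
        ext p
        simp only [Set.mem_union, Set.mem_diff, Set.mem_inter_iff]
        constructor
        · rintro (⟨hm, -⟩ | ⟨hpo, hq⟩)
          · exact hm
          · exact absurd hq (hpostP p hpo)
        · intro hm
          exact Or.inl ⟨hm, fun hc => hpreP p hc hm.2⟩
      rcases ihv with ⟨J, ρ, hJ, hπ, hρc, hMa⟩ | ⟨J, τ, ρ, hJ, hπ, hτ, hρ, hMb⟩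
      · left; exact ⟨J, ρ, hJ, by rw [hproj, hπ], hρc, by rw [hMQ]; exact hMa⟩
      · right; exact ⟨J, τ, ρ, hJ, by rw [hproj, hπ], hτ, hρ, by rw [hMQ]; exact hMb⟩

end Aux

/-- projections of firing sequences onto the transitions adjacent to an
initially empty distributed place are prefixes of alternations of complete
in-sequences and complete out-sequences. -/
theorem stmt4 (N : Net P T) (Q : Set P) [DecidablePred (· ∈ adjQ N Q)]
    (hsafe : safe N) (hdp : distPlace N Q)
    (hinit : Q ∩ N.minit = ∅)
    (hins : (insQ N Q).Nonempty) (hrem : (remQ N Q).Nonempty)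
    (σ : List T) (hσ : isFiringSeq N σ) :
    ∃ τ ∈ langPlus (langMul {ω | isCInSeq N Q ω} {ω | isCOutSeq N Q ω}),
      proj (adjQ N Q) σ <+: τ := by
    classical
  have hinv := inv_all N Q hsafe hdp hinit σ hσ
  unfold InvQ at hinv
  obtain ⟨t0, ht0⟩ := hins
  obtain ⟨u0, hu0⟩ := hrem
  obtain ⟨c, -, hc⟩ := hdp.2.2.2.1 [t0] (isInSeq_singleton ht0)
  obtain ⟨d, -, hd⟩ := hdp.2.2.2.2 [u0] (isOutSeq_singleton hu0)
  rcases hinv with ⟨J, ρ, hJ, hπ, hρc, -⟩ | ⟨J, τ, ρ, hJ, hπ, hτ, hρ, -⟩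
  · rcases hρc with rfl | hρ
    · rcases eq_or_ne J [] with rfl | hJne
      · refine ⟨c ++ d, ⟨[c ++ d], by simp, ?_, by simp⟩, ?_⟩
        · intro u hu; simp at hu; subst hu
          exact ⟨c, hc, d, hd, rfl⟩
        · rw [hπ]; simp
      · exact ⟨J.flatten, ⟨J, hJne, hJ, rfl⟩, by rw [hπ]; simp⟩
    · obtain ⟨τc, hpre, hcc⟩ := hdp.2.2.2.1 ρ hρ
      refine ⟨J.flatten ++ (τc ++ d), ⟨J ++ [τc ++ d], by simp, ?_,
        by simp [List.flatten_append]⟩, ?_⟩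
      · intro b hb
        rcases List.mem_append.1 hb with h | h
        · exact hJ b h
        · simp at h; subst h; exact ⟨τc, hcc, d, hd, rfl⟩
      · rw [hπ, List.prefix_append_right_inj]
        exact hpre.trans (List.prefix_append τc d)
  · obtain ⟨τo, hpre, hco⟩ := hdp.2.2.2.2 ρ hρ
    refine ⟨J.flatten ++ (τ ++ τo), ⟨J ++ [τ ++ τo], by simp, ?_,
      by simp [List.flatten_append]⟩, ?_⟩
    · intro b hb
      rcases List.mem_append.1 hb with h | h
      · exact hJ b h
      · simp at h; subst h; exact ⟨τ, hτ, τo, hco, rfl⟩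
    · rw [hπ, List.prefix_append_right_inj, List.prefix_append_right_inj]
      exact hpre
end

section
/- Let P and P' be separated distributed places over tagged-transition-identified places, and let P ⊗ P' = {π_{Z ∪ Z'} | π_Z ∈ P, π_{Z'} ∈ P'} be their cross-product. Then for every transition t adjacent to P: •t ∩ (P ⊗ P') = (•t ∩ P) ⊗ P' and t• ∩ (P ⊗ P') = (t• ∩ P) ⊗ P', and symmetrically for transitions adjacent to P'. -/
open Set

variable {P T : Type}

/-- tagged transitions `t^in` / `t^out` identifying places -/
inductive Tag (T : Type) where
  | inp : T → Tag T
  | out : T → Tag T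

/-- the net whose places are identified with their sets of tagged adjacent
transitions: `(t, π_Z) ∈ Fl` iff `t^in ∈ Z` and `(π_Z, t) ∈ Fl` iff `t^out ∈ Z`. -/
def tagNet (T : Type) : Net (Set (Tag T)) T where
  pre t := {Z | Tag.out t ∈ Z}
  post t := {Z | Tag.inp t ∈ Z}
  minit := ∅

/-- cross-product of sets of tagged places -/
def cross {T : Type} (Q R : Set (Set (Tag T))) : Set (Set (Tag T)) :=
  {W | ∃ Z ∈ Q, ∃ Z' ∈ R, W = Z ∪ Z'}

lemma cross_comm (Q R : Set (Set (Tag T))) : cross Q R = cross R Q := by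
  ext W
  constructor <;> rintro ⟨Z, hZ, Z', hZ', rfl⟩ <;> exact ⟨Z', hZ', Z, hZ, union_comm _ _⟩

lemma setOf_mem_inter_cross {x : Tag T} {R : Set (Set (Tag T))} (hR : ∀ Z' ∈ R, x ∉ Z')
    (Q : Set (Set (Tag T))) :
    {Z | x ∈ Z} ∩ cross Q R = cross ({Z | x ∈ Z} ∩ Q) R := by
  ext W
  constructor
  · rintro ⟨hx, Z, hZ, Z', hZ', rfl⟩
    rcases hx with hx | hx
    · exact ⟨Z, ⟨hx, hZ⟩, Z', hZ', rfl⟩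
    · exact absurd hx (hR Z' hZ')
  · rintro ⟨Z, ⟨hx, hZ⟩, Z', hZ', rfl⟩
    exact ⟨Or.inl hx, Z, hZ, Z', hZ', rfl⟩

lemma tags_notMem_of_notMem_adjQ {Q : Set (Set (Tag T))} {t : T}
    (ht : t ∉ adjQ (tagNet T) Q) {Z : Set (Tag T)} (hZ : Z ∈ Q) :
    Tag.out t ∉ Z ∧ Tag.inp t ∉ Z :=
  ⟨fun h => ht (Or.inr ⟨Z, h, hZ⟩), fun h => ht (Or.inl ⟨Z, h, hZ⟩)⟩

lemma tagNet_inter_cross_of_notMem_adjQ (Q : Set (Set (Tag T))) {R : Set (Set (Tag T))} {t : T}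
    (ht : t ∉ adjQ (tagNet T) R) :
    (tagNet T).pre t ∩ cross Q R = cross ((tagNet T).pre t ∩ Q) R ∧
      (tagNet T).post t ∩ cross Q R = cross ((tagNet T).post t ∩ Q) R :=
  ⟨setOf_mem_inter_cross (fun _ hZ => (tags_notMem_of_notMem_adjQ ht hZ).1) Q,
    setOf_mem_inter_cross (fun _ hZ => (tags_notMem_of_notMem_adjQ ht hZ).2) Q⟩

theorem stmt11_general (T : Type) (A B : Set (Set (Tag T)))
    (hsep : separated (tagNet T) A B) :
    (∀ t ∈ adjQ (tagNet T) A,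
      (tagNet T).pre t ∩ cross A B = cross ((tagNet T).pre t ∩ A) B ∧
      (tagNet T).post t ∩ cross A B = cross ((tagNet T).post t ∩ A) B) ∧
    (∀ t ∈ adjQ (tagNet T) B,
      (tagNet T).pre t ∩ cross A B = cross ((tagNet T).pre t ∩ B) A ∧
      (tagNet T).post t ∩ cross A B = cross ((tagNet T).post t ∩ B) A) := by
  have hdisj : Disjoint (adjQ (tagNet T) A) (adjQ (tagNet T) B) :=
    disjoint_iff_inter_eq_empty.2 hsep
  refine ⟨fun t ht => tagNet_inter_cross_of_notMem_adjQ A (hdisj.notMem_of_mem_left ht),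
    fun t ht => ?_⟩
  rw [cross_comm A B]
  exact tagNet_inter_cross_of_notMem_adjQ B (hdisj.notMem_of_mem_right ht)

/-- cross-product distributes over presets/postsets of adjacent
transitions of separated distributed places. -/
theorem stmt11 (T : Type) (A B : Set (Set (Tag T)))
    (hA : distPlace (tagNet T) A) (hB : distPlace (tagNet T) B)
    (hsep : separated (tagNet T) A B) :
    (∀ t ∈ adjQ (tagNet T) A,
      (tagNet T).pre t ∩ cross A B = cross ((tagNet T).pre t ∩ A) B ∧
      (tagNet T).post t ∩ cross A B = cross ((tagNet T).post t ∩ A) B) ∧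
    (∀ t ∈ adjQ (tagNet T) B,
      (tagNet T).pre t ∩ cross A B = cross ((tagNet T).pre t ∩ B) A ∧
      (tagNet T).post t ∩ cross A B = cross ((tagNet T).post t ∩ B) A) :=
  stmt11_general T A B hsep
end
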